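/- The 6-stage explicit Runge–Kutta method (A, b, c) from equation (7) of the paper satisfies all eight order-4 vector conditions: b^T 1 = 1, b^T c = 1/2, b^T c² = 1/3, b^T A c = 1/6, b^T c³ = 1/4, b^T (c · Ac) = 1/8, b^T A² c = 1/24, and b^T A c² = 1/12, where c^k and products are taken componentwise. -/

import Mathlib

open scoped BigOperators

/-- Abscissae of the method (7) of the paper. -/
noncomputable def cRK : Fin 6 → ℝ := ![0, 1/4, 1/2, 3/4, 3/10, 1]

/-- Weights of the method (7) of the paper. -/
noncomputable def bRK : Fin 6 → ℝ := ![5/54, 0, 0, 32/81, 250/567, 1/14]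

/-- Coefficient matrix of the method (7) of the paper. -/
noncomputable def ARK : Matrix (Fin 6) (Fin 6) ℝ :=
  !![0, 0, 0, 0, 0, 0;
     1/4, 0, 0, 0, 0, 0;
     -1/2, 1, 0, 0, 0, 0;
     3/16, 0, 9/16, 0, 0, 0;
     291/2500, 108/625, 63/2500, -9/625, 0, 0;
     -146/135, 152/15, -7/15, 428/405, -700/81, 0]

/-!
The quadrature conditions `∑ bᵢ cᵢᵏ = 1/(k+1)`, `k ≤ 3`, are checked directly. The other four
follow from Butcher's simplifying assumptions `A c = c²/2` and `A c² = c³/3`, which hold at every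
stage of positive weight; they fail only at stages 2 and 3, where `b` vanishes. For `bᵀ A² c` write
`A c = c²/2 + d`: the defect `d` lives on stages 2 and 3, where `bᵀ A = (4/5, 1/5)` and
`d = (-1/32, 1/8)`, so `bᵀ A d = 0` and `bᵀ A² c = bᵀ A c² / 2 = 1/24`.
-/

open Matrix

section ButcherTableau

variable {ι R : Type*} [Fintype ι]

theorem sum_sum_mul_mul_eq_dotProduct_mulVec [CommSemiring R] (b v : ι → R) (A : Matrix ι ι R) :
    ∑ i, ∑ j, b i * A i j * v j = b ⬝ᵥ (A *ᵥ v) := by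
  simp only [dotProduct, mulVec, Finset.mul_sum, mul_assoc]

theorem sum_sum_sum_mul_mul_mul_eq_dotProduct_mulVec_mulVec [CommSemiring R] (b v : ι → R)
    (A : Matrix ι ι R) :
    ∑ i, ∑ j, ∑ k, b i * A i j * A j k * v k = b ⬝ᵥ (A *ᵥ (A *ᵥ v)) := by
  simp only [dotProduct, mulVec, Finset.mul_sum, mul_assoc]

variable [Field R] {b c : ι → R} {A : Matrix ι ι R}

theorem dotProduct_mulVec_eq_of_stage_order_two (h : ∀ i, b i * (A *ᵥ c) i = b i * c i ^ 2 / 2) :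
    b ⬝ᵥ (A *ᵥ c) = (∑ i, b i * c i ^ 2) / 2 := by
  rw [Finset.sum_div]
  exact Finset.sum_congr rfl fun i _ => h i

theorem sum_mul_mul_mulVec_eq_of_stage_order_two
    (h : ∀ i, b i * (A *ᵥ c) i = b i * c i ^ 2 / 2) :
    ∑ i, b i * c i * (A *ᵥ c) i = (∑ i, b i * c i ^ 3) / 2 := by
  rw [Finset.sum_div]
  refine Finset.sum_congr rfl fun i _ => ?_
  linear_combination c i * h i

theorem dotProduct_mulVec_sq_eq_of_stage_order_three
    (h : ∀ i, b i * (A *ᵥ c ^ 2) i = b i * c i ^ 3 / 3) :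
    b ⬝ᵥ (A *ᵥ c ^ 2) = (∑ i, b i * c i ^ 3) / 3 := by
  rw [Finset.sum_div]
  exact Finset.sum_congr rfl fun i _ => h i

theorem dotProduct_mulVec_mulVec_eq_of_dotProduct_defect_eq_zero
    (hdefect : (b ᵥ* A) ⬝ᵥ (A *ᵥ c - (2 : R)⁻¹ • c ^ 2) = 0) :
    b ⬝ᵥ (A *ᵥ (A *ᵥ c)) = b ⬝ᵥ (A *ᵥ c ^ 2) / 2 := by
  have hsplit : A *ᵥ c = (2 : R)⁻¹ • c ^ 2 + (A *ᵥ c - (2 : R)⁻¹ • c ^ 2) := by abel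
  rw [dotProduct_mulVec, hsplit, dotProduct_add, hdefect, add_zero, dotProduct_smul,
    ← dotProduct_mulVec, smul_eq_mul, inv_mul_eq_div]

end ButcherTableau

theorem bRK_quadrature (k : ℕ) (hk : k < 4) : ∑ i, bRK i * cRK i ^ k = 1 / (k + 1) := by
  interval_cases k <;> norm_num [bRK, cRK, Fin.sum_univ_succ]

theorem bRK_mul_ARK_mulVec_cRK (i : Fin 6) :
    bRK i * (ARK *ᵥ cRK) i = bRK i * cRK i ^ 2 / 2 := by
  fin_cases i <;> norm_num [bRK, cRK, ARK, mulVec, dotProduct, Fin.sum_univ_succ]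

theorem bRK_mul_ARK_mulVec_cRK_sq (i : Fin 6) :
    bRK i * (ARK *ᵥ cRK ^ 2) i = bRK i * cRK i ^ 3 / 3 := by
  fin_cases i <;> norm_num [bRK, cRK, ARK, mulVec, dotProduct, Fin.sum_univ_succ]

theorem bRK_vecMul_ARK_dotProduct_defect :
    (bRK ᵥ* ARK) ⬝ᵥ (ARK *ᵥ cRK - (2 : ℝ)⁻¹ • cRK ^ 2) = 0 := by
  norm_num [bRK, cRK, ARK, vecMul, mulVec, dotProduct, Fin.sum_univ_succ]

theorem method7_order_four_conditions :
    (∑ i, bRK i = 1) ∧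
    (∑ i, bRK i * cRK i = 1/2) ∧
    (∑ i, bRK i * cRK i ^ 2 = 1/3) ∧
    (∑ i, ∑ j, bRK i * ARK i j * cRK j = 1/6) ∧
    (∑ i, bRK i * cRK i ^ 3 = 1/4) ∧
    (∑ i, bRK i * cRK i * (∑ j, ARK i j * cRK j) = 1/8) ∧
    (∑ i, ∑ j, ∑ k, bRK i * ARK i j * ARK j k * cRK k = 1/24) ∧
    (∑ i, ∑ j, bRK i * ARK i j * cRK j ^ 2 = 1/12) := by
  have h0 := bRK_quadrature 0 (by norm_num)
  have h1 := bRK_quadrature 1 (by norm_num)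
  have h2 := bRK_quadrature 2 (by norm_num)
  have h3 := bRK_quadrature 3 (by norm_num)
  norm_num at h0 h1 h2 h3
  refine ⟨h0, h1, h2, ?_, h3, ?_, ?_, ?_⟩
  · rw [sum_sum_mul_mul_eq_dotProduct_mulVec,
      dotProduct_mulVec_eq_of_stage_order_two bRK_mul_ARK_mulVec_cRK, h2]
    norm_num
  · refine (sum_mul_mul_mulVec_eq_of_stage_order_two bRK_mul_ARK_mulVec_cRK).trans ?_
    rw [h3]
    norm_num
  · rw [sum_sum_sum_mul_mul_mul_eq_dotProduct_mulVec_mulVec,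
      dotProduct_mulVec_mulVec_eq_of_dotProduct_defect_eq_zero bRK_vecMul_ARK_dotProduct_defect,
      dotProduct_mulVec_sq_eq_of_stage_order_three bRK_mul_ARK_mulVec_cRK_sq, h3]
    norm_num
  · refine (sum_sum_mul_mul_eq_dotProduct_mulVec bRK (cRK ^ 2) ARK).trans ?_
    rw [dotProduct_mulVec_sq_eq_of_stage_order_three bRK_mul_ARK_mulVec_cRK_sq, h3]
    norm_num
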